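/- If A and B are independent real-valued random variables, then for every r > 0, Q_r(A+B) ≥ Q_r(A)·Q_r(B)/2, where Q_r is the Lévy concentration function. -/

import Mathlib

open MeasureTheory ProbabilityTheory Filter ENNReal

/-- The Lévy concentration function `Q_r(X) = sup_x P(x < X ≤ x + r)`. -/
noncomputable def Qc {Ω : Type*} [MeasurableSpace Ω] (μ : Measure Ω) (X : Ω → ℝ) (r : ℝ) : ℝ≥0∞ :=
  ⨆ x : ℝ, μ {ω | x < X ω ∧ X ω ≤ x + r}

/-! For independent `A`, `B`, a window of length `r` for `A` and one of length `s` for `B` add up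
to a window of length `r + s` for `A + B`, so `Q_r(A) Q_s(B) ≤ Q_{r+s}(A + B)`. Splitting a window
of length `2r` into two of length `r` gives `Q_{2r} ≤ 2 Q_r`. -/

open Set

namespace Qc

variable {Ω : Type*} [MeasurableSpace Ω] {μ : Measure Ω}

lemma measure_preimage_Ioc_le (X : Ω → ℝ) (r x : ℝ) : μ (X ⁻¹' Ioc x (x + r)) ≤ Qc μ X r :=
  le_iSup (fun z => μ {ω | z < X ω ∧ X ω ≤ z + r}) x

lemma add_le (X : Ω → ℝ) (r s : ℝ) : Qc μ X (r + s) ≤ Qc μ X r + Qc μ X s := by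
  refine iSup_le fun x => ?_
  calc μ (X ⁻¹' Ioc x (x + (r + s)))
      ≤ μ (X ⁻¹' Ioc x (x + r) ∪ X ⁻¹' Ioc (x + r) (x + r + s)) := by
        rw [← preimage_union, ← add_assoc]
        exact measure_mono (preimage_mono Ioc_subset_Ioc_union_Ioc)
    _ ≤ μ (X ⁻¹' Ioc x (x + r)) + μ (X ⁻¹' Ioc (x + r) (x + r + s)) := measure_union_le _ _
    _ ≤ Qc μ X r + Qc μ X s := add_le_add (measure_preimage_Ioc_le X r x)
        (measure_preimage_Ioc_le X s (x + r))

lemma mul_le_add_of_indepFun {A B : Ω → ℝ} (hAB : IndepFun A B μ) (r s : ℝ) :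
    Qc μ A r * Qc μ B s ≤ Qc μ (A + B) (r + s) := by
  simp only [Qc, ENNReal.iSup_mul, ENNReal.mul_iSup]
  refine iSup₂_le fun y x => ?_
  have hsum : A ⁻¹' Ioc x (x + r) ∩ B ⁻¹' Ioc y (y + s) ⊆ (A + B) ⁻¹' Ioc (x + y) (x + y + (r + s)) :=
    fun ω ⟨⟨hA₁, hA₂⟩, hB₁, hB₂⟩ => ⟨by simp only [Pi.add_apply]; linarith,
      by simp only [Pi.add_apply]; linarith⟩
  calc μ (A ⁻¹' Ioc x (x + r)) * μ (B ⁻¹' Ioc y (y + s))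
      = μ (A ⁻¹' Ioc x (x + r) ∩ B ⁻¹' Ioc y (y + s)) :=
        (hAB.measure_inter_preimage_eq_mul _ _ measurableSet_Ioc measurableSet_Ioc).symm
    _ ≤ μ ((A + B) ⁻¹' Ioc (x + y) (x + y + (r + s))) := measure_mono hsum
    _ ≤ ⨆ z : ℝ, μ ((A + B) ⁻¹' Ioc z (z + (r + s))) :=
        le_iSup (fun z => μ ((A + B) ⁻¹' Ioc z (z + (r + s)))) (x + y)

end Qc

theorem stmt6_general {Ω : Type*} [MeasurableSpace Ω] (μ : Measure Ω)
    (A B : Ω → ℝ) (hAB : IndepFun A B μ)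
    (r : ℝ) :
    Qc μ A r * Qc μ B r / 2 ≤ Qc μ (fun ω => A ω + B ω) r := by
  rw [ENNReal.div_le_iff_le_mul (Or.inl two_ne_zero) (Or.inl ofNat_ne_top)]
  calc Qc μ A r * Qc μ B r ≤ Qc μ (A + B) (r + r) := Qc.mul_le_add_of_indepFun hAB r r
    _ ≤ Qc μ (A + B) r + Qc μ (A + B) r := Qc.add_le _ r r
    _ = Qc μ (fun ω => A ω + B ω) r * 2 := by rw [← two_mul, mul_comm]; rfl

theorem stmt6 {Ω : Type*} [MeasurableSpace Ω] (μ : Measure Ω) [IsProbabilityMeasure μ]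
    (A B : Ω → ℝ) (hA : Measurable A) (hB : Measurable B) (hAB : IndepFun A B μ)
    (r : ℝ) (hr : 0 < r) :
    Qc μ A r * Qc μ B r / 2 ≤ Qc μ (fun ω => A ω + B ω) r :=
  stmt6_general μ A B hAB r
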